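/- Let Θ* ∈ ℝ^{(n+m)×n} have rank r with singular value decomposition Θ* = U D Vᵀ. If Δ ∈ ℝ^{(n+m)×n} satisfies ‖Θ* + Δ‖_nuc ≤ ‖Θ*‖_nuc, then ‖Δ_{M̄⊥}‖_nuc ≤ ‖Δ_{M̄}‖_nuc. -/

import Mathlib

open MeasureTheory ProbabilityTheory Matrix Real

/-- Frobenius norm of a real matrix. -/
noncomputable def frobNorm {p q : ℕ} (A : Matrix (Fin p) (Fin q) ℝ) : ℝ :=
  Real.sqrt (∑ i, ∑ j, (A i j) ^ 2)

/-- Singular values of a real matrix: square roots of the eigenvalues of Aᵀ * A. -/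
noncomputable def svals {p q : ℕ} (A : Matrix (Fin p) (Fin q) ℝ) (j : Fin q) : ℝ :=
  Real.sqrt ((show (Aᵀ * A).IsHermitian by
    simpa [Matrix.conjTranspose_eq_transpose_of_trivial] using
      Matrix.isHermitian_conjTranspose_mul_self A).eigenvalues j)

/-- Operator (spectral) norm: the largest singular value. -/
noncomputable def opNorm {p q : ℕ} (A : Matrix (Fin p) (Fin q) ℝ) : ℝ := ⨆ j, svals A j

/-- Nuclear norm: the sum of the singular values. -/
noncomputable def nucNorm {p q : ℕ} (A : Matrix (Fin p) (Fin q) ℝ) : ℝ := ∑ j, svals A j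

lemma Matrix.isHermitian_transpose_mul_self {p q : ℕ} (A : Matrix (Fin p) (Fin q) ℝ) :
    (Aᵀ * A).IsHermitian := by
  simpa [Matrix.conjTranspose_eq_transpose_of_trivial] using
    Matrix.isHermitian_conjTranspose_mul_self A

def Contra {p q : ℕ} (G : Matrix (Fin p) (Fin q) ℝ) : Prop :=
  ∀ x : Fin q → ℝ, (G *ᵥ x) ⬝ᵥ (G *ᵥ x) ≤ x ⬝ᵥ x

lemma spectral_real {p q : ℕ} (A : Matrix (Fin p) (Fin q) ℝ) :
    ∃ W : Matrix (Fin q) (Fin q) ℝ, Wᵀ * W = 1 ∧ W * Wᵀ = 1 ∧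
      Aᵀ * A = W * Matrix.diagonal ((Matrix.isHermitian_transpose_mul_self A).eigenvalues) * Wᵀ := by
  have hH := Matrix.isHermitian_transpose_mul_self A
  set W : Matrix (Fin q) (Fin q) ℝ :=
    (Matrix.IsHermitian.eigenvectorUnitary hH : Matrix (Fin q) (Fin q) ℝ) with hWdef
  have hst : star W = Wᵀ := by
    rw [Matrix.star_eq_conjTranspose, Matrix.conjTranspose_eq_transpose_of_trivial]
  have h1 : W * Wᵀ = 1 := by
    rw [← hst]; exact (Matrix.mem_unitaryGroup_iff).mp (Matrix.IsHermitian.eigenvectorUnitary hH).2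
  have h2 : Wᵀ * W = 1 := by
    rw [← hst]; exact (Matrix.mem_unitaryGroup_iff').mp (Matrix.IsHermitian.eigenvectorUnitary hH).2
  refine ⟨W, h2, h1, ?_⟩
  have := hH.spectral_theorem
  rw [Unitary.conjStarAlgAut_apply, ← hWdef, hst] at this
  exact this

lemma eigs_nonneg {p q : ℕ} (A : Matrix (Fin p) (Fin q) ℝ) (j : Fin q) :
    0 ≤ (Matrix.isHermitian_transpose_mul_self A).eigenvalues j := by
  have h := Matrix.posSemidef_conjTranspose_mul_self A
  rw [Matrix.conjTranspose_eq_transpose_of_trivial] at h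
  exact h.eigenvalues_nonneg j

lemma dot_self_nonneg {k : ℕ} (f : Fin k → ℝ) : 0 ≤ f ⬝ᵥ f :=
  Finset.sum_nonneg fun i _ => mul_self_nonneg (f i)

lemma dot_le_sqrt {k : ℕ} (f g : Fin k → ℝ) :
    f ⬝ᵥ g ≤ Real.sqrt (f ⬝ᵥ f) * Real.sqrt (g ⬝ᵥ g) := by
  have h := Finset.sum_mul_sq_le_sq_mul_sq Finset.univ f g
  have h2 : f ⬝ᵥ g ≤ Real.sqrt ((f ⬝ᵥ g) ^ 2) := by
    rw [Real.sqrt_sq_eq_abs]; exact le_abs_self _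
  calc f ⬝ᵥ g ≤ Real.sqrt ((f ⬝ᵥ g) ^ 2) := h2
    _ ≤ Real.sqrt ((∑ i, f i ^ 2) * ∑ i, g i ^ 2) := Real.sqrt_le_sqrt h
    _ = Real.sqrt (f ⬝ᵥ f) * Real.sqrt (g ⬝ᵥ g) := by
        rw [Real.sqrt_mul (by positivity)]
        congr 2 <;> simp [dotProduct, sq]

lemma mulVec_dot {a b : ℕ} (A : Matrix (Fin a) (Fin b) ℝ) (x : Fin b → ℝ) (z : Fin a → ℝ) :
    (A *ᵥ x) ⬝ᵥ z = x ⬝ᵥ (Aᵀ *ᵥ z) := by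
  rw [Matrix.dotProduct_mulVec, Matrix.vecMul_transpose]

lemma entry_quad {a b k : ℕ} (P : Matrix (Fin a) (Fin k) ℝ) (M : Matrix (Fin a) (Fin b) ℝ)
    (Q : Matrix (Fin b) (Fin k) ℝ) (j : Fin k) :
    (Pᵀ * M * Q) j j = (fun i => P i j) ⬝ᵥ (M *ᵥ (fun i => Q i j)) := by
  simp only [Matrix.mul_apply, Matrix.transpose_apply, dotProduct, Matrix.mulVec,
    Finset.sum_mul, Finset.mul_sum]
  rw [Finset.sum_comm]
  exact Finset.sum_congr rfl fun x _ => Finset.sum_congr rfl fun y _ => by ring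

lemma col_dot_one {a k : ℕ} {P : Matrix (Fin a) (Fin k) ℝ} (hP : Pᵀ * P = 1) (j : Fin k) :
    (fun i => P i j) ⬝ᵥ (fun i => P i j) = 1 := by
  have := entry_quad P (1 : Matrix (Fin a) (Fin a) ℝ) P j
  rw [Matrix.mul_one, hP] at this
  rw [Matrix.one_mulVec] at this
  rw [← this, Matrix.one_apply_eq]

lemma trace_conj {k : ℕ} {W : Matrix (Fin k) (Fin k) ℝ} (hW : W * Wᵀ = 1)
    (M : Matrix (Fin k) (Fin k) ℝ) : Matrix.trace (Wᵀ * M * W) = Matrix.trace M := by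
  rw [Matrix.trace_mul_cycle, hW, Matrix.one_mul]

lemma sandwich {k : ℕ} {W : Matrix (Fin k) (Fin k) ℝ} (hW : Wᵀ * W = 1) (a b : Fin k → ℝ) :
    (W * Matrix.diagonal a * Wᵀ) * (W * Matrix.diagonal b * Wᵀ)
      = W * Matrix.diagonal (fun j => a j * b j) * Wᵀ := by
  have : Matrix.diagonal a * Matrix.diagonal b = Matrix.diagonal (fun j => a j * b j) :=
    Matrix.diagonal_mul_diagonal a b
  calc (W * Matrix.diagonal a * Wᵀ) * (W * Matrix.diagonal b * Wᵀ)
      = W * (Matrix.diagonal a * ((Wᵀ * W) * (Matrix.diagonal b * Wᵀ))) := by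
        simp only [Matrix.mul_assoc]
    _ = _ := by rw [hW, Matrix.one_mul, ← Matrix.mul_assoc (Matrix.diagonal a), this,
          Matrix.mul_assoc]

lemma quad_le {k : ℕ} {W : Matrix (Fin k) (Fin k) ℝ} (hW' : W * Wᵀ = 1)
    {e : Fin k → ℝ} (he : ∀ j, e j ≤ 1) (x : Fin k → ℝ) :
    x ⬝ᵥ ((W * Matrix.diagonal e * Wᵀ) *ᵥ x) ≤ x ⬝ᵥ x := by
  set y := Wᵀ *ᵥ x with hy
  have h1 : (W * Matrix.diagonal e * Wᵀ) *ᵥ x = W *ᵥ (Matrix.diagonal e *ᵥ y) := by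
    rw [Matrix.mulVec_mulVec, Matrix.mulVec_mulVec]
  have h2 : x ⬝ᵥ (W *ᵥ (Matrix.diagonal e *ᵥ y)) = y ⬝ᵥ (Matrix.diagonal e *ᵥ y) := by
    rw [Matrix.dotProduct_mulVec, ← Matrix.mulVec_transpose]
  have h3 : y ⬝ᵥ (Matrix.diagonal e *ᵥ y) ≤ y ⬝ᵥ y := by
    apply Finset.sum_le_sum
    intro i _
    rw [Matrix.mulVec_diagonal]
    have : y i * (e i * y i) = e i * (y i * y i) := by ring
    rw [this]
    nlinarith [mul_self_nonneg (y i), he i]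
  have h4 : y ⬝ᵥ y = x ⬝ᵥ x := by
    rw [hy, mulVec_dot, Matrix.transpose_transpose, Matrix.mulVec_mulVec, hW',
      Matrix.one_mulVec]
  rw [h1, h2]; rw [h4] at h3; exact h3

lemma trace_le_nucNorm {p q : ℕ} {G A : Matrix (Fin p) (Fin q) ℝ} (hG : Contra G) :
    Matrix.trace (Gᵀ * A) ≤ nucNorm A := by
  obtain ⟨W, hWtW, hWWt, hspec⟩ := spectral_real A
  set lam := (Matrix.isHermitian_transpose_mul_self A).eigenvalues with hlam
  have key : Matrix.trace (Gᵀ * A) = ∑ j, (G *ᵥ (fun i => W i j)) ⬝ᵥ (A *ᵥ (fun i => W i j)) := by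
    rw [← trace_conj hWWt (Gᵀ * A)]
    rw [Matrix.trace]
    refine Finset.sum_congr rfl fun j _ => ?_
    rw [Matrix.diag_apply, entry_quad W (Gᵀ * A) W j, ← Matrix.mulVec_mulVec,
      ← mulVec_dot]
  rw [key]
  apply Finset.sum_le_sum
  intro j _
  set v : Fin q → ℝ := fun i => W i j with hv
  have hdiag : Wᵀ * (W * Matrix.diagonal lam * Wᵀ) * W = Matrix.diagonal lam := by
    calc Wᵀ * (W * Matrix.diagonal lam * Wᵀ) * W
        = (Wᵀ * W) * (Matrix.diagonal lam * (Wᵀ * W)) := by simp only [Matrix.mul_assoc]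
      _ = Matrix.diagonal lam := by rw [hWtW, Matrix.one_mul, Matrix.mul_one]
  have hAv : (A *ᵥ v) ⬝ᵥ (A *ᵥ v) = lam j := by
    rw [mulVec_dot, Matrix.mulVec_mulVec, ← entry_quad W (Aᵀ * A) W j, hspec, hdiag,
      Matrix.diagonal_apply_eq]
  have hGv : (G *ᵥ v) ⬝ᵥ (G *ᵥ v) ≤ 1 := by
    have := hG v
    rwa [col_dot_one hWtW j] at this
  have s1 : Real.sqrt ((G *ᵥ v) ⬝ᵥ (G *ᵥ v)) ≤ 1 := by
    rw [show (1:ℝ) = Real.sqrt 1 by simp]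
    exact Real.sqrt_le_sqrt hGv
  have s2 : Real.sqrt ((A *ᵥ v) ⬝ᵥ (A *ᵥ v)) = svals A j := by rw [hAv]; rfl
  calc (G *ᵥ v) ⬝ᵥ (A *ᵥ v)
      ≤ Real.sqrt ((G *ᵥ v) ⬝ᵥ (G *ᵥ v)) * Real.sqrt ((A *ᵥ v) ⬝ᵥ (A *ᵥ v)) := dot_le_sqrt _ _
    _ = Real.sqrt ((G *ᵥ v) ⬝ᵥ (G *ᵥ v)) * svals A j := by rw [s2]
    _ ≤ 1 * svals A j :=
        mul_le_mul_of_nonneg_right s1 (Real.sqrt_nonneg _)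
    _ = svals A j := one_mul _

lemma exists_dual {p q : ℕ} (A : Matrix (Fin p) (Fin q) ℝ) :
    ∃ G : Matrix (Fin p) (Fin q) ℝ, Contra G ∧ Matrix.trace (Gᵀ * A) = nucNorm A := by
  obtain ⟨W, hWtW, hWWt, hspec⟩ := spectral_real A
  set lam := (Matrix.isHermitian_transpose_mul_self A).eigenvalues with hlam
  set g : Fin q → ℝ := fun j => (Real.sqrt (lam j))⁻¹ with hg
  set B : Matrix (Fin q) (Fin q) ℝ := W * Matrix.diagonal g * Wᵀ with hB
  have hBt : Bᵀ = B := by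
    rw [hB, Matrix.transpose_mul, Matrix.transpose_mul, Matrix.transpose_transpose,
      Matrix.diagonal_transpose, Matrix.mul_assoc]
  have hgl : ∀ j, lam j * g j = Real.sqrt (lam j) := by
    intro j
    by_cases hz : lam j = 0
    · simp [hg, hz]
    · have hpos : 0 < lam j := lt_of_le_of_ne (eigs_nonneg A j) (Ne.symm hz)
      rw [hg]
      dsimp only
      rw [← div_eq_mul_inv, Real.div_sqrt]
  refine ⟨A * B, ?_, ?_⟩
  · -- Contra
    intro x
    have hGt : (A * B)ᵀ * (A * B) = W * Matrix.diagonal (fun j => g j * (lam j * g j)) * Wᵀ := by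
      calc (A * B)ᵀ * (A * B) = Bᵀ * (Aᵀ * A) * B := by
            rw [Matrix.transpose_mul]; simp only [Matrix.mul_assoc]
        _ = (W * Matrix.diagonal g * Wᵀ) * ((W * Matrix.diagonal lam * Wᵀ)
              * (W * Matrix.diagonal g * Wᵀ)) := by rw [hBt, hspec, hB, Matrix.mul_assoc]
        _ = (W * Matrix.diagonal g * Wᵀ) * (W * Matrix.diagonal (fun j => lam j * g j) * Wᵀ) := by
            rw [sandwich hWtW]
        _ = W * Matrix.diagonal (fun j => g j * (lam j * g j)) * Wᵀ := by
            rw [sandwich hWtW]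
    have he : ∀ j, g j * (lam j * g j) ≤ 1 := by
      intro j
      have h1 : g j * (lam j * g j) = (lam j * g j) * g j := by ring
      rw [h1, hgl j, hg]
      dsimp only
      by_cases hz : lam j = 0
      · simp [hz]
      · have hsp : 0 < Real.sqrt (lam j) :=
          Real.sqrt_pos.mpr (lt_of_le_of_ne (eigs_nonneg A j) (Ne.symm hz))
        rw [mul_inv_cancel₀ hsp.ne']
    calc ((A * B) *ᵥ x) ⬝ᵥ ((A * B) *ᵥ x)
        = x ⬝ᵥ (((A * B)ᵀ * (A * B)) *ᵥ x) := by
          rw [mulVec_dot, Matrix.mulVec_mulVec]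
      _ ≤ x ⬝ᵥ x := by rw [hGt]; exact quad_le hWWt he x
  · -- trace
    have h1 : (A * B)ᵀ * A = B * (Aᵀ * A) := by
      rw [Matrix.transpose_mul, hBt, Matrix.mul_assoc]
    have h2 : B * (Aᵀ * A) = W * Matrix.diagonal (fun j => g j * lam j) * Wᵀ := by
      rw [hspec, hB, sandwich hWtW]
    rw [h1, h2, Matrix.trace_mul_cycle, hWtW, Matrix.one_mul, Matrix.trace_diagonal]
    unfold nucNorm svals
    refine Finset.sum_congr rfl fun j _ => ?_
    rw [mul_comm, hgl j]

lemma contra_neg {p q : ℕ} {G : Matrix (Fin p) (Fin q) ℝ} (hG : Contra G) : Contra (-G) := by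
  intro x
  rw [Matrix.neg_mulVec, neg_dotProduct, dotProduct_neg, neg_neg]
  exact hG x

lemma trace_UDV_le {a b r : ℕ} {G : Matrix (Fin a) (Fin b) ℝ} (hG : Contra G)
    {U : Matrix (Fin a) (Fin r) ℝ} {V : Matrix (Fin b) (Fin r) ℝ} {D : Matrix (Fin r) (Fin r) ℝ}
    (hU : Uᵀ * U = 1) (hV : Vᵀ * V = 1) (hDdiag : ∀ i j, i ≠ j → D i j = 0)
    (hD0 : ∀ i, 0 ≤ D i i) :
    Matrix.trace (Gᵀ * (U * D * Vᵀ)) ≤ Matrix.trace D := by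
  have h1 : Gᵀ * (U * D * Vᵀ) = (Gᵀ * U * D) * Vᵀ := by simp only [Matrix.mul_assoc]
  rw [h1, Matrix.trace_mul_comm]
  have h2 : Vᵀ * (Gᵀ * U * D) = (Vᵀ * Gᵀ * U) * D := by simp only [Matrix.mul_assoc]
  rw [h2]
  set M := Vᵀ * Gᵀ * U with hM
  have hMD : ∀ j, (M * D) j j = M j j * D j j := by
    intro j
    rw [Matrix.mul_apply]
    rw [Finset.sum_eq_single j]
    · intro k _ hk
      rw [hDdiag k j hk, mul_zero]
    · intro hj; exact absurd (Finset.mem_univ j) hj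
  have hMjj : ∀ j, M j j ≤ 1 := by
    intro j
    have he : M j j = (G *ᵥ (fun i => V i j)) ⬝ᵥ (fun i => U i j) := by
      rw [hM, entry_quad V Gᵀ U j, ← mulVec_dot]
    rw [he]
    have hVj := col_dot_one hV j
    have hUj := col_dot_one hU j
    have hGV : (G *ᵥ (fun i => V i j)) ⬝ᵥ (G *ᵥ (fun i => V i j)) ≤ 1 := by
      have := hG (fun i => V i j); rwa [hVj] at this
    calc (G *ᵥ (fun i => V i j)) ⬝ᵥ (fun i => U i j)
        ≤ Real.sqrt ((G *ᵥ (fun i => V i j)) ⬝ᵥ (G *ᵥ (fun i => V i j)))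
          * Real.sqrt ((fun i => U i j) ⬝ᵥ (fun i => U i j)) := dot_le_sqrt _ _
      _ ≤ 1 * 1 := by
          apply mul_le_mul _ _ (Real.sqrt_nonneg _) zero_le_one
          · rw [show (1:ℝ) = Real.sqrt 1 by simp]; exact Real.sqrt_le_sqrt hGV
          · rw [hUj]; simp
      _ = 1 := one_mul 1
  calc Matrix.trace (M * D) = ∑ j, M j j * D j j := by
        rw [Matrix.trace]; exact Finset.sum_congr rfl fun j _ => hMD j
    _ ≤ ∑ j, 1 * D j j := Finset.sum_le_sum fun j _ =>
        mul_le_mul_of_nonneg_right (hMjj j) (hD0 j)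
    _ = Matrix.trace D := by rw [Matrix.trace]; exact Finset.sum_congr rfl fun j _ => one_mul _



/-- if ‖Θ* + Δ‖_nuc ≤ ‖Θ*‖_nuc then, with
Δ_{M̄⊥} := (I − UUᵀ)Δ(I − VVᵀ) and Δ_{M̄} := Δ − Δ_{M̄⊥}, one has
‖Δ_{M̄⊥}‖_nuc ≤ ‖Δ_{M̄}‖_nuc. -/
theorem cone_constraint_of_nucNorm_decrease {n m r : ℕ}
    (U : Matrix (Fin (n + m)) (Fin r) ℝ) (V : Matrix (Fin n) (Fin r) ℝ)
    (D : Matrix (Fin r) (Fin r) ℝ)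
    (hU : Uᵀ * U = 1) (hV : Vᵀ * V = 1)
    (hDdiag : ∀ i j, i ≠ j → D i j = 0) (hDpos : ∀ i, 0 < D i i)
    (Θstar : Matrix (Fin (n + m)) (Fin n) ℝ)
    (hsvd : Θstar = U * D * Vᵀ) (hrank : Θstar.rank = r)
    (Δ : Matrix (Fin (n + m)) (Fin n) ℝ)
    (h : nucNorm (Θstar + Δ) ≤ nucNorm Θstar) :
    nucNorm ((1 - U * Uᵀ) * Δ * (1 - V * Vᵀ))
      ≤ nucNorm (Δ - (1 - U * Uᵀ) * Δ * (1 - V * Vᵀ)) := by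
  subst hsvd
  set Θ := U * D * Vᵀ with hΘ
  set P : Matrix (Fin (n + m)) (Fin (n + m)) ℝ := 1 - U * Uᵀ with hPdef
  set Q : Matrix (Fin n) (Fin n) ℝ := 1 - V * Vᵀ with hQdef
  set Dp := P * Δ * Q with hDp
  have hUtP : Uᵀ * P = 0 := by
    rw [hPdef, Matrix.mul_sub, Matrix.mul_one, ← Matrix.mul_assoc, hU, Matrix.one_mul, sub_self]
  have hPU : P * U = 0 := by
    rw [hPdef, Matrix.sub_mul, Matrix.one_mul, Matrix.mul_assoc, hU, Matrix.mul_one, sub_self]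
  have hPt : Pᵀ = P := by
    rw [hPdef, Matrix.transpose_sub, Matrix.transpose_one, Matrix.transpose_mul,
      Matrix.transpose_transpose]
  have hPP : P * P = P := by
    nth_rewrite 1 [hPdef]
    rw [Matrix.sub_mul, Matrix.one_mul, Matrix.mul_assoc, hUtP, Matrix.mul_zero, sub_zero]
  have hVtQ : Vᵀ * Q = 0 := by
    rw [hQdef, Matrix.mul_sub, Matrix.mul_one, ← Matrix.mul_assoc, hV, Matrix.one_mul, sub_self]
  have hQV : Q * V = 0 := by
    rw [hQdef, Matrix.sub_mul, Matrix.one_mul, Matrix.mul_assoc, hV, Matrix.mul_one, sub_self]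
  have hQt : Qᵀ = Q := by
    rw [hQdef, Matrix.transpose_sub, Matrix.transpose_one, Matrix.transpose_mul,
      Matrix.transpose_transpose]
  have hQQ : Q * Q = Q := by
    nth_rewrite 1 [hQdef]
    rw [Matrix.sub_mul, Matrix.one_mul, Matrix.mul_assoc, hVtQ, Matrix.mul_zero, sub_zero]
  obtain ⟨G₂, hG2c, hG2t⟩ := exists_dual Dp
  set G := U * Vᵀ + P * (G₂ * Q) with hGdef
  -- G is a contraction
  have hGc : Contra G := by
    intro x
    set s := Vᵀ *ᵥ x with hs
    set t := Q *ᵥ x with ht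
    set w := G₂ *ᵥ t with hw
    set a := U *ᵥ s with ha
    set b := P *ᵥ w with hb
    have hGx : G *ᵥ x = a + b := by
      rw [hGdef, Matrix.add_mulVec, ← Matrix.mulVec_mulVec, ← Matrix.mulVec_mulVec,
        ← Matrix.mulVec_mulVec]
    have haa : a ⬝ᵥ a = s ⬝ᵥ s := by
      rw [ha, mulVec_dot, Matrix.mulVec_mulVec, hU, Matrix.one_mulVec]
    have hab : a ⬝ᵥ b = 0 := by
      rw [ha, hb, mulVec_dot, Matrix.mulVec_mulVec, hUtP, Matrix.zero_mulVec,
        dotProduct_zero]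
    have hba : b ⬝ᵥ a = 0 := by rw [dotProduct_comm]; exact hab
    have hbb : b ⬝ᵥ b ≤ w ⬝ᵥ w := by
      have h1 : b ⬝ᵥ b = w ⬝ᵥ (P *ᵥ w) := by
        rw [hb, mulVec_dot, Matrix.mulVec_mulVec, hPt, hPP]
      have h2 : w ⬝ᵥ (P *ᵥ w) = w ⬝ᵥ w - (Uᵀ *ᵥ w) ⬝ᵥ (Uᵀ *ᵥ w) := by
        rw [hPdef, Matrix.sub_mulVec, dotProduct_sub, Matrix.one_mulVec]
        congr 1
        rw [← Matrix.mulVec_mulVec, dotProduct_comm, mulVec_dot]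
      have h3 := dot_self_nonneg (Uᵀ *ᵥ w)
      linarith
    have hww : w ⬝ᵥ w ≤ t ⬝ᵥ t := hG2c t
    have htt : t ⬝ᵥ t = x ⬝ᵥ x - s ⬝ᵥ s := by
      have h1 : t ⬝ᵥ t = x ⬝ᵥ (Q *ᵥ x) := by
        rw [ht, mulVec_dot, Matrix.mulVec_mulVec, hQt, hQQ]
      rw [h1, hQdef, Matrix.sub_mulVec, dotProduct_sub, Matrix.one_mulVec]
      congr 1
      rw [← Matrix.mulVec_mulVec, dotProduct_comm, mulVec_dot, hs]
    have hexp : (G *ᵥ x) ⬝ᵥ (G *ᵥ x) = a ⬝ᵥ a + a ⬝ᵥ b + b ⬝ᵥ a + b ⬝ᵥ b := by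
      rw [hGx, add_dotProduct, dotProduct_add, dotProduct_add]
      ring
    rw [hexp]
    linarith
  -- the key trace identity
  have hGt : Gᵀ = V * Uᵀ + Q * (G₂ᵀ * P) := by
    rw [hGdef, Matrix.transpose_add, Matrix.transpose_mul, Matrix.transpose_transpose,
      Matrix.transpose_mul, Matrix.transpose_mul, hPt, hQt, Matrix.mul_assoc]
  have t1 : Matrix.trace ((V * Uᵀ) * Θ) = Matrix.trace D := by
    have e : (V * Uᵀ) * Θ = V * (D * Vᵀ) := by
      calc (V * Uᵀ) * (U * D * Vᵀ) = V * ((Uᵀ * U) * (D * Vᵀ)) := by simp only [Matrix.mul_assoc]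
        _ = V * (D * Vᵀ) := by rw [hU, Matrix.one_mul]
    rw [e, Matrix.trace_mul_comm]
    calc Matrix.trace ((D * Vᵀ) * V) = Matrix.trace (D * (Vᵀ * V)) := by rw [Matrix.mul_assoc]
      _ = Matrix.trace D := by rw [hV, Matrix.mul_one]
  have t2 : (V * Uᵀ) * Dp = 0 := by
    calc (V * Uᵀ) * (P * Δ * Q) = V * ((Uᵀ * P) * (Δ * Q)) := by simp only [Matrix.mul_assoc]
      _ = 0 := by rw [hUtP, Matrix.zero_mul, Matrix.mul_zero]
  have t3 : (Q * (G₂ᵀ * P)) * Θ = 0 := by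
    calc (Q * (G₂ᵀ * P)) * (U * D * Vᵀ) = Q * (G₂ᵀ * ((P * U) * (D * Vᵀ))) := by
          simp only [Matrix.mul_assoc]
      _ = 0 := by rw [hPU, Matrix.zero_mul, Matrix.mul_zero, Matrix.mul_zero]
  have t4 : Matrix.trace ((Q * (G₂ᵀ * P)) * Dp) = nucNorm Dp := by
    have e1 : (Q * (G₂ᵀ * P)) * Dp = Q * (G₂ᵀ * (P * (Δ * Q))) := by
      calc (Q * (G₂ᵀ * P)) * (P * Δ * Q) = Q * (G₂ᵀ * ((P * P) * (Δ * Q))) := by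
            simp only [Matrix.mul_assoc]
        _ = Q * (G₂ᵀ * (P * (Δ * Q))) := by rw [hPP]
    have e2 : (G₂ᵀ * (P * (Δ * Q))) * Q = G₂ᵀ * Dp := by
      calc (G₂ᵀ * (P * (Δ * Q))) * Q = G₂ᵀ * (P * (Δ * (Q * Q))) := by
            simp only [Matrix.mul_assoc]
        _ = G₂ᵀ * (P * Δ * Q) := by rw [hQQ]; simp only [Matrix.mul_assoc]
    rw [e1, Matrix.trace_mul_comm, e2, hG2t]
  have htr : Matrix.trace (Gᵀ * (Θ + Dp)) = Matrix.trace D + nucNorm Dp := by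
    rw [hGt, Matrix.add_mul, Matrix.mul_add, Matrix.mul_add, Matrix.trace_add, Matrix.trace_add,
      Matrix.trace_add, t1, t2, t3, t4, Matrix.trace_zero]
    ring
  -- dual bounds
  obtain ⟨Gs, hGsC, hGsT⟩ := exists_dual Θ
  have hNTh : nucNorm Θ ≤ Matrix.trace D := by
    rw [← hGsT]
    exact trace_UDV_le hGsC hU hV hDdiag (fun i => (hDpos i).le)
  have h4 : Matrix.trace (Gᵀ * (Θ + Δ)) ≤ nucNorm (Θ + Δ) := trace_le_nucNorm hGc
  have h6 : Matrix.trace ((-G)ᵀ * (Δ - Dp)) ≤ nucNorm (Δ - Dp) :=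
    trace_le_nucNorm (contra_neg hGc)
  have hsplit : Matrix.trace (Gᵀ * (Θ + Dp))
      = Matrix.trace (Gᵀ * (Θ + Δ)) + Matrix.trace ((-G)ᵀ * (Δ - Dp)) := by
    rw [Matrix.transpose_neg, Matrix.neg_mul, Matrix.trace_neg]
    have e : Gᵀ * (Θ + Dp) = Gᵀ * (Θ + Δ) - Gᵀ * (Δ - Dp) := by
      rw [← Matrix.mul_sub]
      congr 1
      abel
    rw [e, Matrix.trace_sub]
    ring
  linarith
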